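/- Let X be a complex Banach space and let A, B be bounded linear operators on X. Then the g-Drazin spectra coincide: σ_d(A∘B) = σ_d(B∘A). -/
import Mathlib


/-- An element `a` of a ring is quasinilpotent if `1 + a*x` is a unit
for every `x` commuting with `a`. -/
def Quasinilpotent {R : Type*} [Ring R] (a : R) : Prop :=
  ∀ x : R, a * x = x * a → IsUnit (1 + a * x)

/-- `h` is a generalized Drazin inverse of `a`. -/
def IsGDrazinInverse {R : Type*} [Ring R] (a h : R) : Prop :=
  h = h * a * h ∧ (∀ y : R, y * a = a * y → h * y = y * h) ∧
    Quasinilpotent (a - a ^ 2 * h)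

private lemma isUnit_of_left_right {R : Type*} [Ring R] {x l r : R}
    (hl : l * x = 1) (hr : x * r = 1) : IsUnit x := by
  have hlr : l = r := by
    calc l = l * (x * r) := by rw [hr, mul_one]
    _ = (l * x) * r := by rw [mul_assoc]
    _ = r := by rw [hl, one_mul]
  exact ⟨⟨x, r, hr, by rw [← hlr]; exact hl⟩, rfl⟩

private lemma jacobson_unit {R : Type*} [Ring R] {u v : R}
    (h : IsUnit (1 + u * v)) : IsUnit (1 + v * u) := by
  obtain ⟨w, hw⟩ := h
  have h1 : ↑w⁻¹ + u * v * ↑w⁻¹ = 1 := by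
    have : (1 + u * v) * ↑w⁻¹ = 1 := by rw [← hw]; exact w.mul_inv
    rwa [add_mul, one_mul] at this
  have h2 : ↑w⁻¹ + ↑w⁻¹ * (u * v) = 1 := by
    have : ↑w⁻¹ * (1 + u * v) = 1 := by rw [← hw]; exact w.inv_mul
    rwa [mul_add, mul_one] at this
  have e1 : u * v * ↑w⁻¹ = 1 - ↑w⁻¹ := eq_sub_of_add_eq' h1
  have e2 : ↑w⁻¹ * (u * v) = 1 - ↑w⁻¹ := eq_sub_of_add_eq' h2
  refine isUnit_of_left_right (l := 1 - v * ↑w⁻¹ * u) (r := 1 - v * ↑w⁻¹ * u) ?_ ?_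
  · calc (1 - v * ↑w⁻¹ * u) * (1 + v * u)
        = 1 + v * u - v * ↑w⁻¹ * u - v * (↑w⁻¹ * (u * v)) * u := by noncomm_ring
    _ = 1 + v * u - v * ↑w⁻¹ * u - v * (1 - ↑w⁻¹) * u := by rw [e2]
    _ = 1 := by noncomm_ring
  · calc (1 + v * u) * (1 - v * ↑w⁻¹ * u)
        = 1 + v * u - v * ↑w⁻¹ * u - v * (u * v * ↑w⁻¹) * u := by noncomm_ring
    _ = 1 + v * u - v * ↑w⁻¹ * u - v * (1 - ↑w⁻¹) * u := by rw [e1]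
    _ = 1 := by noncomm_ring

private lemma quasinilpotent_swap {R : Type*} [Ring R] {a b : R}
    (h : Quasinilpotent (a * b)) : Quasinilpotent (b * a) := by
  intro x hx
  have hd : (a * b) * (a * (x * x) * b) = (a * (x * x) * b) * (a * b) := by
    calc (a * b) * (a * (x * x) * b) = a * ((b * a * x) * x) * b := by noncomm_ring
    _ = a * ((x * (b * a)) * x) * b := by rw [← hx]
    _ = a * (x * (b * a * x)) * b := by noncomm_ring
    _ = a * (x * (x * (b * a))) * b := by rw [hx]
    _ = (a * (x * x) * b) * (a * b) := by noncomm_ring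
  have hneg : (a * b) * (-(a * (x * x) * b)) = (-(a * (x * x) * b)) * (a * b) := by
    rw [mul_neg, neg_mul, hd]
  have hu2 : IsUnit (1 - (a * x * b) * (a * x * b)) := by
    have h3 : IsUnit (1 + (a * b) * (-(a * (x * x) * b))) := h _ hneg
    have e : 1 + (a * b) * (-(a * (x * x) * b)) = 1 - (a * b) * (a * (x * x) * b) := by
      noncomm_ring
    have ec : (a * x * b) * (a * x * b) = (a * b) * (a * (x * x) * b) := by
      calc (a * x * b) * (a * x * b) = a * (x * (b * a * x)) * b := by noncomm_ring
      _ = a * (x * (x * (b * a))) * b := by rw [hx]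
      _ = (a * (x * x) * b) * (a * b) := by noncomm_ring
      _ = (a * b) * (a * (x * x) * b) := hd.symm
    rw [e] at h3; rwa [ec]
  have hu1 : IsUnit (1 + a * x * b) := by
    obtain ⟨s, hs⟩ := hu2
    refine isUnit_of_left_right (l := ↑s⁻¹ * (1 - a * x * b)) (r := (1 - a * x * b) * ↑s⁻¹) ?_ ?_
    · calc (↑s⁻¹ * (1 - a * x * b)) * (1 + a * x * b)
          = ↑s⁻¹ * ((1 - (a * x * b) * (a * x * b))) := by noncomm_ring
      _ = ↑s⁻¹ * ↑s := by rw [hs]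
      _ = 1 := s.inv_mul
    · calc (1 + a * x * b) * ((1 - a * x * b) * ↑s⁻¹)
          = (1 - (a * x * b) * (a * x * b)) * ↑s⁻¹ := by noncomm_ring
      _ = ↑s * ↑s⁻¹ := by rw [hs]
      _ = 1 := s.mul_inv
  have := jacobson_unit (u := a * x) (v := b) (by rwa [show (a * x) * b = a * x * b from rfl])
  rwa [show b * (a * x) = b * a * x by rw [mul_assoc]] at this
private lemma cline {R : Type*} [Ring R] (a b h : R)
    (hd : IsGDrazinInverse (a * b) h) : IsGDrazinInverse (b * a) (b * (h * h) * a) := by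
  obtain ⟨h1, h2, h3⟩ := hd
  have hab : h * (a * b) = (a * b) * h := h2 _ rfl
  have habh : h = (a * b) * (h * h) := by
    calc h = h * (a * b) * h := h1
    _ = (a * b) * h * h := by rw [hab]
    _ = (a * b) * (h * h) := by rw [mul_assoc]
  refine ⟨?_, ?_, ?_⟩
  · have key : (h * h) * ((a * b) * ((a * b) * (h * h))) = h * h := by
      calc (h * h) * ((a * b) * ((a * b) * (h * h)))
          = (h * (h * (a * b))) * ((a * b) * (h * h)) := by noncomm_ring
      _ = (h * ((a * b) * h)) * ((a * b) * (h * h)) := by rw [hab]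
      _ = ((h * (a * b)) * h) * ((a * b) * (h * h)) := by noncomm_ring
      _ = (((a * b) * h) * h) * ((a * b) * (h * h)) := by rw [hab]
      _ = ((a * b) * (h * h)) * ((a * b) * (h * h)) := by noncomm_ring
      _ = h * h := by rw [← habh]
    calc b * (h * h) * a
        = b * ((h * h) * ((a * b) * ((a * b) * (h * h)))) * a := by rw [key]
    _ = b * (h * h) * a * (b * a) * (b * (h * h) * a) := by noncomm_ring
  · intro y hy
    have hg : (a * (y * b)) * (a * b) = (a * b) * (a * (y * b)) := by
      calc (a * (y * b)) * (a * b) = a * ((y * (b * a)) * b) := by noncomm_ring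
      _ = a * (((b * a) * y) * b) := by rw [hy]
      _ = (a * b) * (a * (y * b)) := by noncomm_ring
    have hhg : h * (a * (y * b)) = (a * (y * b)) * h := h2 _ hg
    have key2 : h * h = (a * b) * (h * (h * h)) := by
      nth_rewrite 1 [habh]
      noncomm_ring
    have hab3 : (a * b) * (h * (h * h)) = (h * (h * h)) * (a * b) := by
      calc (a * b) * (h * (h * h)) = ((a * b) * h) * (h * h) := by noncomm_ring
      _ = (h * (a * b)) * (h * h) := by rw [hab]
      _ = h * (((a * b) * h) * h) := by noncomm_ring
      _ = h * ((h * (a * b)) * h) := by rw [hab]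
      _ = (h * h) * ((a * b) * h) := by noncomm_ring
      _ = (h * h) * (h * (a * b)) := by rw [hab]
      _ = (h * (h * h)) * (a * b) := by noncomm_ring
    have hg3 : (h * (h * h)) * (a * (y * b)) = (a * (y * b)) * (h * (h * h)) := by
      calc (h * (h * h)) * (a * (y * b)) = (h * h) * (h * (a * (y * b))) := by noncomm_ring
      _ = (h * h) * ((a * (y * b)) * h) := by rw [hhg]
      _ = h * ((h * (a * (y * b))) * h) := by noncomm_ring
      _ = h * (((a * (y * b)) * h) * h) := by rw [hhg]
      _ = (h * (a * (y * b))) * (h * h) := by noncomm_ring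
      _ = ((a * (y * b)) * h) * (h * h) := by rw [hhg]
      _ = (a * (y * b)) * (h * (h * h)) := by noncomm_ring
    calc (b * (h * h) * a) * y
        = b * ((h * h) * (a * y)) := by noncomm_ring
    _ = b * (((a * b) * (h * (h * h))) * (a * y)) := by conv_lhs => rw [key2]
    _ = b * (((h * (h * h)) * (a * b)) * (a * y)) := by rw [hab3]
    _ = (b * (h * (h * h)) * a) * ((b * a) * y) := by noncomm_ring
    _ = (b * (h * (h * h)) * a) * (y * (b * a)) := by rw [← hy]
    _ = b * ((h * (h * h)) * (a * (y * b))) * a := by noncomm_ring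
    _ = b * ((a * (y * b)) * (h * (h * h))) * a := by rw [hg3]
    _ = ((b * a) * y) * (b * (h * (h * h)) * a) := by noncomm_ring
    _ = (y * (b * a)) * (b * (h * (h * h)) * a) := by rw [hy]
    _ = y * (b * ((a * b) * (h * (h * h))) * a) := by noncomm_ring
    _ = y * (b * (h * h) * a) := by rw [← key2]
  · have key4 : (a * b) * ((a * b) * (h * h)) = (a * b) * h := by rw [← habh]
    have hq1 : Quasinilpotent (((1 - (a * b) * h) * a) * b) := by
      have e1 : ((1 - (a * b) * h) * a) * b = (a * b) - (a * b) ^ 2 * h := by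
        calc ((1 - (a * b) * h) * a) * b = a * b - (a * b) * (h * (a * b)) := by noncomm_ring
        _ = a * b - (a * b) * ((a * b) * h) := by rw [hab]
        _ = (a * b) - (a * b) ^ 2 * h := by noncomm_ring
      rw [e1]; exact h3
    have hq2 := quasinilpotent_swap hq1
    have e2 : b * a - (b * a) ^ 2 * (b * (h * h) * a) = b * ((1 - (a * b) * h) * a) := by
      calc b * a - (b * a) ^ 2 * (b * (h * h) * a)
          = b * a - b * ((a * b) * ((a * b) * (h * h))) * a := by noncomm_ring
      _ = b * a - b * ((a * b) * h) * a := by rw [key4]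
      _ = b * ((1 - (a * b) * h) * a) := by noncomm_ring
    rw [e2]; exact hq2
private lemma koliha {R : Type*} [Ring R] {β q : R} (hqq : q * q = q)
    (hc : ∀ y : R, y * β = β * y → q * y = y * q)
    (hqn : Quasinilpotent (β * q)) (hu : IsUnit (β + q)) :
    ∃ k : R, IsGDrazinInverse β k := by
  obtain ⟨u, huv⟩ := hu
  have hqβ : q * β = β * q := hc β rfl
  have hqu : Commute q ↑u := by
    show q * ↑u = ↑u * q
    rw [huv]
    calc q * (β + q) = q * β + q * q := by rw [mul_add]
    _ = β * q + q * q := by rw [hqβ]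
    _ = (β + q) * q := by rw [add_mul]
  have hqui : q * ↑u⁻¹ = ↑u⁻¹ * q := (hqu.units_inv_right).eq
  have hβu : Commute β ↑u := by
    show β * ↑u = ↑u * β
    rw [huv]
    calc β * (β + q) = β * β + q * β := by rw [mul_add, hqβ]
    _ = (β + q) * β := by rw [add_mul]
  have hβui : β * ↑u⁻¹ = ↑u⁻¹ * β := (hβu.units_inv_right).eq
  have h0 : q * (1 - q) = 0 := by rw [mul_sub, mul_one, hqq, sub_self]
  have key : ↑u⁻¹ * (β * (1 - q)) = 1 - q := by
    calc ↑u⁻¹ * (β * (1 - q)) = ↑u⁻¹ * ((β + q) * (1 - q)) - ↑u⁻¹ * (q * (1 - q)) := by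
          noncomm_ring
    _ = ↑u⁻¹ * (↑u * (1 - q)) - ↑u⁻¹ * 0 := by rw [h0, ← huv]
    _ = 1 - q := by rw [mul_zero, sub_zero, ← mul_assoc, u.inv_mul, one_mul]
  refine ⟨↑u⁻¹ * (1 - q), ?_, ?_, ?_⟩
  · have h1qui : (1 - q) * ↑u⁻¹ = ↑u⁻¹ * (1 - q) := by
      rw [sub_mul, one_mul, mul_sub, mul_one, hqui]
    have step : (↑u⁻¹ * (1 - q)) * β = 1 - q := by
      calc (↑u⁻¹ * (1 - q)) * β = ↑u⁻¹ * ((1 - q) * β) := by rw [mul_assoc]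
      _ = ↑u⁻¹ * (β * (1 - q)) := by
          rw [show ((1:R) - q) * β = β - q * β by noncomm_ring, hqβ,
            show β - β * q = β * (1 - q) by noncomm_ring]
      _ = 1 - q := key
    have idem : ((1:R) - q) * (1 - q) = 1 - q := by
      rw [show ((1:R) - q) * (1 - q) = 1 - q - (q - q * q) by noncomm_ring, hqq,
        sub_self, sub_zero]
    symm
    calc ↑u⁻¹ * (1 - q) * β * (↑u⁻¹ * (1 - q))
        = (1 - q) * (↑u⁻¹ * (1 - q)) := by rw [step]
    _ = ((1 - q) * ↑u⁻¹) * (1 - q) := by rw [mul_assoc]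
    _ = (↑u⁻¹ * (1 - q)) * (1 - q) := by rw [h1qui]
    _ = ↑u⁻¹ * ((1 - q) * (1 - q)) := by rw [mul_assoc]
    _ = ↑u⁻¹ * (1 - q) := by rw [idem]
  · intro y hy
    have hqy : q * y = y * q := hc y hy
    have hyu : Commute y ↑u := by
      show y * ↑u = ↑u * y
      rw [huv]
      calc y * (β + q) = y * β + y * q := by rw [mul_add]
      _ = β * y + q * y := by rw [hy, ← hqy]
      _ = (β + q) * y := by rw [add_mul]
    have hyui : y * ↑u⁻¹ = ↑u⁻¹ * y := (hyu.units_inv_right).eq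
    calc (↑u⁻¹ * (1 - q)) * y = ↑u⁻¹ * (y - q * y) := by noncomm_ring
    _ = ↑u⁻¹ * (y - y * q) := by rw [hqy]
    _ = ↑u⁻¹ * (y * (1 - q)) := by noncomm_ring
    _ = (↑u⁻¹ * y) * (1 - q) := by rw [mul_assoc]
    _ = (y * ↑u⁻¹) * (1 - q) := by rw [hyui]
    _ = y * (↑u⁻¹ * (1 - q)) := by rw [mul_assoc]
  · have e : β - β ^ 2 * (↑u⁻¹ * (1 - q)) = β * q := by
      calc β - β ^ 2 * (↑u⁻¹ * (1 - q)) = β - β * ((β * ↑u⁻¹) * (1 - q)) := by noncomm_ring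
      _ = β - β * ((↑u⁻¹ * β) * (1 - q)) := by rw [hβui]
      _ = β - β * (↑u⁻¹ * (β * (1 - q))) := by rw [mul_assoc]
      _ = β - β * (1 - q) := by rw [key]
      _ = β * q := by noncomm_ring
    rw [e]; exact hqn
private lemma comm_of_comm_one_sub {R : Type*} [Ring R] {x y : R}
    (h : x * (1 - y) = (1 - y) * x) : x * y = y * x := by
  have e : x - x * y = x - y * x := by
    calc x - x * y = x * (1 - y) := by noncomm_ring
    _ = (1 - y) * x := h
    _ = x - y * x := by noncomm_ring
  exact sub_right_injective e

private lemma comm_one_sub {R : Type*} [Ring R] {x y : R}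
    (h : x * y = y * x) : x * (1 - y) = (1 - y) * x := by
  rw [mul_sub, mul_one, sub_mul, one_mul, h]

private lemma jacobsonGD {R : Type*} [Ring R] (a b h : R)
    (hd : IsGDrazinInverse (1 - a * b) h) : ∃ k : R, IsGDrazinInverse (1 - b * a) k := by
  obtain ⟨h1, h2, h3⟩ := hd
  have hαh : h * (1 - a * b) = (1 - a * b) * h := h2 _ rfl
  have hab : h * (a * b) = (a * b) * h := comm_of_comm_one_sub hαh
  obtain ⟨p, hp⟩ : ∃ p : R, p = 1 - (1 - a * b) * h := ⟨_, rfl⟩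
  have hpα : p * (1 - a * b) = (1 - a * b) * p := by
    rw [hp]
    calc (1 - (1 - a * b) * h) * (1 - a * b)
        = (1 - a * b) - (1 - a * b) * (h * (1 - a * b)) := by noncomm_ring
    _ = (1 - a * b) - (1 - a * b) * ((1 - a * b) * h) := by rw [hαh]
    _ = (1 - a * b) * (1 - (1 - a * b) * h) := by noncomm_ring
  have hpab : p * (a * b) = (a * b) * p := comm_of_comm_one_sub hpα
  have hpp : p * p = p := by
    rw [hp]
    calc (1 - (1 - a * b) * h) * (1 - (1 - a * b) * h)
        = 1 - (1 - a * b) * h - (1 - a * b) * h + (1 - a * b) * (h * (1 - a * b) * h) := by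
          noncomm_ring
    _ = 1 - (1 - a * b) * h - (1 - a * b) * h + (1 - a * b) * h := by rw [← h1]
    _ = 1 - (1 - a * b) * h := by noncomm_ring
  have hph : p * h = 0 := by
    rw [hp]
    calc (1 - (1 - a * b) * h) * h = h - ((1 - a * b) * h) * h := by noncomm_ring
    _ = h - (h * (1 - a * b)) * h := by rw [← hαh]
    _ = 0 := by rw [show (h * (1 - a * b)) * h = h * (1 - a * b) * h from rfl, ← h1, sub_self]
  have hhα1p : h * (1 - a * b) = 1 - p := by rw [hp, sub_sub_cancel, hαh]
  have hαh1p : (1 - a * b) * h = 1 - p := by rw [hp, sub_sub_cancel]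
  have hαp_qnil : Quasinilpotent ((1 - a * b) * p) := by
    have e : (1 - a * b) * p = (1 - a * b) - (1 - a * b) ^ 2 * h := by rw [hp]; noncomm_ring
    rw [e]; exact h3
  have hu1 : IsUnit (1 + (1 - a * b) * p) := by
    have := hαp_qnil 1 (by rw [mul_one, one_mul])
    rwa [mul_one] at this
  have hw0 : IsUnit (1 - (1 - a * b) * p) := by
    have := hαp_qnil (-1) (by rw [mul_neg, neg_mul, mul_one, one_mul])
    rwa [mul_neg, mul_one, ← sub_eq_add_neg] at this
  obtain ⟨u₁, hu₁⟩ := hu1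
  obtain ⟨w, hwv⟩ := hw0
  -- commutation with the units
  have hαcomm_αp : (1 - a * b) * ((1 - a * b) * p) = ((1 - a * b) * p) * (1 - a * b) := by
    calc (1 - a * b) * ((1 - a * b) * p) = (1 - a * b) * (p * (1 - a * b)) := by rw [hpα]
    _ = ((1 - a * b) * p) * (1 - a * b) := by noncomm_ring
  have hpcomm_αp : p * ((1 - a * b) * p) = ((1 - a * b) * p) * p := by
    calc p * ((1 - a * b) * p) = (p * (1 - a * b)) * p := by noncomm_ring
    _ = ((1 - a * b) * p) * p := by rw [hpα]
  have habcomm_αp : (a * b) * ((1 - a * b) * p) = ((1 - a * b) * p) * (a * b) := by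
    calc (a * b) * ((1 - a * b) * p) = (1 - a * b) * ((a * b) * p) := by noncomm_ring
    _ = (1 - a * b) * (p * (a * b)) := by rw [hpab]
    _ = ((1 - a * b) * p) * (a * b) := by noncomm_ring
  have hpu₁ : Commute p (↑u₁ : R) := by
    show p * ↑u₁ = ↑u₁ * p
    rw [hu₁, mul_add, mul_one, add_mul, one_mul, hpcomm_αp]
  have hpu₁i : p * ↑u₁⁻¹ = ↑u₁⁻¹ * p := (hpu₁.units_inv_right).eq
  have hαu₁ : Commute (1 - a * b) (↑u₁ : R) := by
    show (1 - a * b) * ↑u₁ = ↑u₁ * (1 - a * b)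
    rw [hu₁, mul_add, mul_one, add_mul, one_mul, hαcomm_αp]
  have hαu₁i : (1 - a * b) * ↑u₁⁻¹ = ↑u₁⁻¹ * (1 - a * b) := (hαu₁.units_inv_right).eq
  have hpw : Commute p (↑w : R) := by
    show p * ↑w = ↑w * p
    rw [hwv]
    calc p * (1 - (1 - a * b) * p) = p - p * ((1 - a * b) * p) := by noncomm_ring
    _ = p - ((1 - a * b) * p) * p := by rw [hpcomm_αp]
    _ = (1 - (1 - a * b) * p) * p := by noncomm_ring
  have hpwi : p * ↑w⁻¹ = ↑w⁻¹ * p := (hpw.units_inv_right).eq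
  have habw : Commute (a * b) (↑w : R) := by
    show (a * b) * ↑w = ↑w * (a * b)
    rw [hwv]
    calc (a * b) * (1 - (1 - a * b) * p) = (a * b) - (a * b) * ((1 - a * b) * p) := by
          noncomm_ring
    _ = (a * b) - ((1 - a * b) * p) * (a * b) := by rw [habcomm_αp]
    _ = (1 - (1 - a * b) * p) * (a * b) := by noncomm_ring
  have habwi : (a * b) * ↑w⁻¹ = ↑w⁻¹ * (a * b) := (habw.units_inv_right).eq
  obtain ⟨m, hm⟩ : ∃ m : R, m = p * ↑w⁻¹ := ⟨_, rfl⟩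
  have epw : p * (a * b) = p * ↑w := by
    have e1 : p * ↑w = p - (1 - a * b) * p := by
      rw [hwv]
      calc p * (1 - (1 - a * b) * p) = p - (p * (1 - a * b)) * p := by noncomm_ring
      _ = p - ((1 - a * b) * p) * p := by rw [hpα]
      _ = p - (1 - a * b) * (p * p) := by noncomm_ring
      _ = p - (1 - a * b) * p := by rw [hpp]
    have e2 : p * (a * b) = p - (1 - a * b) * p := by
      calc p * (a * b) = p - p * (1 - a * b) := by noncomm_ring
      _ = p - (1 - a * b) * p := by rw [hpα]
    rw [e1, e2]
  have key3 : m * (a * b) = p := by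
    rw [hm]
    calc (p * ↑w⁻¹) * (a * b) = p * ((a * b) * ↑w⁻¹) := by rw [habwi]; noncomm_ring
    _ = (p * (a * b)) * ↑w⁻¹ := by noncomm_ring
    _ = (p * ↑w) * ↑w⁻¹ := by rw [epw]
    _ = p * (↑w * ↑w⁻¹) := by noncomm_ring
    _ = p := by rw [w.mul_inv, mul_one]
  have key1 : m * ((a * b) * m) = m := by
    calc m * ((a * b) * m) = (m * (a * b)) * m := by noncomm_ring
    _ = p * m := by rw [key3]
    _ = p * (p * ↑w⁻¹) := by rw [hm]
    _ = (p * p) * ↑w⁻¹ := by noncomm_ring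
    _ = p * ↑w⁻¹ := by rw [hpp]
    _ = m := hm.symm
  have habm : (a * b) * m = m * (a * b) := by
    rw [hm]
    calc (a * b) * (p * ↑w⁻¹) = ((a * b) * p) * ↑w⁻¹ := by noncomm_ring
    _ = (p * (a * b)) * ↑w⁻¹ := by rw [hpab]
    _ = p * ((a * b) * ↑w⁻¹) := by noncomm_ring
    _ = p * (↑w⁻¹ * (a * b)) := by rw [habwi]
    _ = (p * ↑w⁻¹) * (a * b) := by noncomm_ring
  have key2m : (a * b) * (m * m) = m := by
    calc (a * b) * (m * m) = ((a * b) * m) * m := by noncomm_ring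
    _ = (m * (a * b)) * m := by rw [habm]
    _ = m * ((a * b) * m) := by noncomm_ring
    _ = m := key1
  have habmm : (a * b) * (m * m) = (m * m) * (a * b) := by
    calc (a * b) * (m * m) = ((a * b) * m) * m := by noncomm_ring
    _ = (m * (a * b)) * m := by rw [habm]
    _ = m * ((a * b) * m) := by noncomm_ring
    _ = m * (m * (a * b)) := by rw [habm]
    _ = (m * m) * (a * b) := by noncomm_ring
  have hpu₁e : p * ↑u₁ = (1 - a * b) * p + p := by
    rw [hu₁]
    calc p * (1 + (1 - a * b) * p) = p + (p * (1 - a * b)) * p := by noncomm_ring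
    _ = p + ((1 - a * b) * p) * p := by rw [hpα]
    _ = p + (1 - a * b) * (p * p) := by noncomm_ring
    _ = (1 - a * b) * p + p := by rw [hpp, add_comm]
  have unitαp : IsUnit ((1 - a * b) + p) := by
    refine isUnit_of_left_right (l := h + p * ↑u₁⁻¹) (r := h + p * ↑u₁⁻¹) ?_ ?_
    · have hhp : h * p = 0 := by
        rw [hp]
        calc h * (1 - (1 - a * b) * h) = h - (h * (1 - a * b)) * h := by noncomm_ring
        _ = 0 := by
          rw [show (h * (1 - a * b)) * h = h * (1 - a * b) * h from rfl, ← h1, sub_self]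
      calc (h + p * ↑u₁⁻¹) * ((1 - a * b) + p)
          = h * (1 - a * b) + h * p + p * (↑u₁⁻¹ * (1 - a * b)) + p * (↑u₁⁻¹ * p) := by
            noncomm_ring
      _ = (1 - p) + 0 + p * ((1 - a * b) * ↑u₁⁻¹) + p * (p * ↑u₁⁻¹) := by
            rw [hhα1p, hhp, hαu₁i, hpu₁i]
      _ = (1 - p) + ((p * (1 - a * b)) * ↑u₁⁻¹ + (p * p) * ↑u₁⁻¹) := by noncomm_ring
      _ = (1 - p) + (((1 - a * b) * p) * ↑u₁⁻¹ + p * ↑u₁⁻¹) := by rw [hpα, hpp]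
      _ = (1 - p) + ((1 - a * b) * p + p) * ↑u₁⁻¹ := by rw [add_mul]
      _ = (1 - p) + (p * ↑u₁) * ↑u₁⁻¹ := by rw [← hpu₁e]
      _ = (1 - p) + p * (↑u₁ * ↑u₁⁻¹) := by noncomm_ring
      _ = 1 := by rw [u₁.mul_inv, mul_one]; noncomm_ring
    · calc ((1 - a * b) + p) * (h + p * ↑u₁⁻¹)
          = (1 - a * b) * h + p * h + ((1 - a * b) * p) * ↑u₁⁻¹ + (p * p) * ↑u₁⁻¹ := by
            noncomm_ring
      _ = (1 - p) + 0 + ((1 - a * b) * p) * ↑u₁⁻¹ + p * ↑u₁⁻¹ := by rw [hαh1p, hph, hpp]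
      _ = (1 - p) + ((1 - a * b) * p + p) * ↑u₁⁻¹ := by noncomm_ring
      _ = (1 - p) + (p * ↑u₁) * ↑u₁⁻¹ := by rw [← hpu₁e]
      _ = (1 - p) + p * (↑u₁ * ↑u₁⁻¹) := by noncomm_ring
      _ = 1 := by rw [u₁.mul_inv, mul_one]; noncomm_ring
  -- hypotheses of `koliha` for β = 1 - b*a, q = b*(m*a)
  have hqq : (b * (m * a)) * (b * (m * a)) = b * (m * a) := by
    calc (b * (m * a)) * (b * (m * a)) = b * ((m * ((a * b) * m)) * a) := by noncomm_ring
    _ = b * (m * a) := by rw [key1]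
  have hcq : ∀ y : R, y * (1 - b * a) = (1 - b * a) * y →
      (b * (m * a)) * y = y * (b * (m * a)) := by
    intro y hy
    have hyba : y * (b * a) = (b * a) * y := comm_of_comm_one_sub hy
    have hgab : (a * (y * b)) * (a * b) = (a * b) * (a * (y * b)) := by
      calc (a * (y * b)) * (a * b) = a * ((y * (b * a)) * b) := by noncomm_ring
      _ = a * (((b * a) * y) * b) := by rw [hyba]
      _ = (a * b) * (a * (y * b)) := by noncomm_ring
    have hhg : h * (a * (y * b)) = (a * (y * b)) * h := h2 _ (comm_one_sub hgab)
    have hαg : (a * (y * b)) * (1 - a * b) = (1 - a * b) * (a * (y * b)) := comm_one_sub hgab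
    have hαhg : ((1 - a * b) * h) * (a * (y * b)) = (a * (y * b)) * ((1 - a * b) * h) := by
      calc ((1 - a * b) * h) * (a * (y * b)) = (1 - a * b) * (h * (a * (y * b))) := by
            noncomm_ring
      _ = (1 - a * b) * ((a * (y * b)) * h) := by rw [hhg]
      _ = ((1 - a * b) * (a * (y * b))) * h := by noncomm_ring
      _ = ((a * (y * b)) * (1 - a * b)) * h := by rw [← hαg]
      _ = (a * (y * b)) * ((1 - a * b) * h) := by noncomm_ring
    have hpg : p * (a * (y * b)) = (a * (y * b)) * p := by
      rw [hp, sub_mul, one_mul, mul_sub, mul_one, hαhg]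
    have hgαp : (a * (y * b)) * ((1 - a * b) * p) = ((1 - a * b) * p) * (a * (y * b)) := by
      calc (a * (y * b)) * ((1 - a * b) * p) = ((a * (y * b)) * (1 - a * b)) * p := by
            noncomm_ring
      _ = ((1 - a * b) * (a * (y * b))) * p := by rw [hαg]
      _ = (1 - a * b) * ((a * (y * b)) * p) := by noncomm_ring
      _ = (1 - a * b) * (p * (a * (y * b))) := by rw [← hpg]
      _ = ((1 - a * b) * p) * (a * (y * b)) := by noncomm_ring
    have hgw : Commute (a * (y * b)) (↑w : R) := by
      show (a * (y * b)) * ↑w = ↑w * (a * (y * b))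
      rw [hwv]
      calc (a * (y * b)) * (1 - (1 - a * b) * p)
          = (a * (y * b)) - (a * (y * b)) * ((1 - a * b) * p) := by noncomm_ring
      _ = (a * (y * b)) - ((1 - a * b) * p) * (a * (y * b)) := by rw [hgαp]
      _ = (1 - (1 - a * b) * p) * (a * (y * b)) := by noncomm_ring
    have hgwi : (a * (y * b)) * ↑w⁻¹ = ↑w⁻¹ * (a * (y * b)) := (hgw.units_inv_right).eq
    have hmg : m * (a * (y * b)) = (a * (y * b)) * m := by
      rw [hm]
      calc (p * ↑w⁻¹) * (a * (y * b)) = p * (↑w⁻¹ * (a * (y * b))) := by noncomm_ring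
      _ = p * ((a * (y * b)) * ↑w⁻¹) := by rw [← hgwi]
      _ = (p * (a * (y * b))) * ↑w⁻¹ := by noncomm_ring
      _ = ((a * (y * b)) * p) * ↑w⁻¹ := by rw [hpg]
      _ = (a * (y * b)) * (p * ↑w⁻¹) := by noncomm_ring
    have hmmg : (m * m) * (a * (y * b)) = (a * (y * b)) * (m * m) := by
      calc (m * m) * (a * (y * b)) = m * (m * (a * (y * b))) := by noncomm_ring
      _ = m * ((a * (y * b)) * m) := by rw [hmg]
      _ = (m * (a * (y * b))) * m := by noncomm_ring
      _ = ((a * (y * b)) * m) * m := by rw [hmg]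
      _ = (a * (y * b)) * (m * m) := by noncomm_ring
    calc (b * (m * a)) * y = b * (m * (a * y)) := by noncomm_ring
    _ = b * (((a * b) * (m * m)) * (a * y)) := by conv_lhs => rw [← key2m]
    _ = b * (((m * m) * (a * b)) * (a * y)) := by rw [habmm]
    _ = (b * (m * m) * a) * ((b * a) * y) := by noncomm_ring
    _ = (b * (m * m) * a) * (y * (b * a)) := by rw [← hyba]
    _ = b * ((m * m) * (a * (y * b))) * a := by noncomm_ring
    _ = b * ((a * (y * b)) * (m * m)) * a := by rw [hmmg]
    _ = ((b * a) * y) * (b * (m * m) * a) := by noncomm_ring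
    _ = (y * (b * a)) * (b * (m * m) * a) := by rw [hyba]
    _ = y * (b * ((a * b) * (m * m)) * a) := by noncomm_ring
    _ = y * (b * (m * a)) := by rw [key2m]; noncomm_ring
  have hqnβq : Quasinilpotent ((1 - b * a) * (b * (m * a))) := by
    have hq1 : Quasinilpotent ((((1 - a * b) * m) * a) * b) := by
      have e : (((1 - a * b) * m) * a) * b = (1 - a * b) - (1 - a * b) ^ 2 * h := by
        calc (((1 - a * b) * m) * a) * b = (1 - a * b) * (m * (a * b)) := by noncomm_ring
        _ = (1 - a * b) * p := by rw [key3]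
        _ = (1 - a * b) - (1 - a * b) ^ 2 * h := by rw [hp]; noncomm_ring
      rw [e]; exact h3
    have hq2 := quasinilpotent_swap hq1
    have e2 : (1 - b * a) * (b * (m * a)) = b * (((1 - a * b) * m) * a) := by noncomm_ring
    rw [e2]; exact hq2
  have huβq : IsUnit ((1 - b * a) + b * (m * a)) := by
    have e3 : 1 + ((m - 1) * a) * b = (1 - a * b) + p := by
      calc 1 + ((m - 1) * a) * b = 1 + m * (a * b) - a * b := by noncomm_ring
      _ = 1 + p - a * b := by rw [key3]
      _ = (1 - a * b) + p := by noncomm_ring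
    have hu' : IsUnit (1 + ((m - 1) * a) * b) := by rw [e3]; exact unitαp
    have hu'' := jacobson_unit hu'
    have e4 : (1 - b * a) + b * (m * a) = 1 + b * ((m - 1) * a) := by noncomm_ring
    rw [e4]; exact hu''
  exact koliha hqq hcq hqnβq huβq
private lemma qnil_smul {R : Type*} [Ring R] [Algebra ℂ R] (z : ℂ) {c : R}
    (hq : Quasinilpotent c) : Quasinilpotent (z • c) := by
  intro x hx
  by_cases hz : z = 0
  · subst hz
    rw [zero_smul, zero_mul, add_zero]
    exact isUnit_one
  · have hcx : c * x = x * c := by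
      have e : z • (c * x) = z • (x * c) := by
        rw [← smul_mul_assoc, hx, mul_smul_comm]
      exact smul_right_injective R hz e
    have := hq (z • x) (by rw [mul_smul_comm, smul_mul_assoc, hcx])
    rwa [mul_smul_comm, ← smul_mul_assoc] at this
private lemma gdi_smul {R : Type*} [Ring R] [Algebra ℂ R] (z : ℂ) (hz : z ≠ 0) (a h : R)
    (hd : IsGDrazinInverse a h) : IsGDrazinInverse (z • a) (z⁻¹ • h) := by
  obtain ⟨h1, h2, h3⟩ := hd
  refine ⟨?_, ?_, ?_⟩
  · symm
    calc (z⁻¹ • h) * (z • a) * (z⁻¹ • h) = (z⁻¹ * (z * z⁻¹)) • (h * a * h) := by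
          simp only [smul_mul_assoc, mul_smul_comm, smul_smul]
    _ = z⁻¹ • (h * a * h) := by rw [mul_inv_cancel₀ hz, mul_one]
    _ = z⁻¹ • h := by rw [← h1]
  · intro y hy
    have hya : y * a = a * y := by
      have e : z • (y * a) = z • (a * y) := by
        rw [← mul_smul_comm, hy, smul_mul_assoc]
      exact smul_right_injective R hz e
    rw [smul_mul_assoc, mul_smul_comm, h2 y hya]
  · have e : z • a - (z • a) ^ 2 * (z⁻¹ • h) = z • (a - a ^ 2 * h) := by
      simp only [pow_two, smul_mul_assoc, mul_smul_comm, smul_smul, smul_sub]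
      rw [show z⁻¹ * (z * z) = z by field_simp]
    rw [e]
    exact qnil_smul z h3
/-- The generalized Drazin spectrum of a bounded operator. -/
def gDrazinSpectrum {X : Type*} [NormedAddCommGroup X] [NormedSpace ℂ X]
    (T : X →L[ℂ] X) : Set ℂ :=
  {z : ℂ | ¬ ∃ h : X →L[ℂ] X, IsGDrazinInverse (z • (1 : X →L[ℂ] X) - T) h}

theorem gDrazinSpectrum_mul_comm {X : Type*} [NormedAddCommGroup X]
    [NormedSpace ℂ X] [CompleteSpace X] (A B : X →L[ℂ] X) :
    gDrazinSpectrum (A * B) = gDrazinSpectrum (B * A) := by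
  have main : ∀ (A B : X →L[ℂ] X) (z : ℂ),
      (∃ h : X →L[ℂ] X, IsGDrazinInverse (z • (1 : X →L[ℂ] X) - A * B) h) →
      ∃ k : X →L[ℂ] X, IsGDrazinInverse (z • (1 : X →L[ℂ] X) - B * A) k := by
    rintro A B z ⟨h, hh⟩
    by_cases hz : z = 0
    · subst hz
      rw [zero_smul, zero_sub] at hh ⊢
      rw [show -(A * B) = (-A) * B from by rw [neg_mul]] at hh
      have := cline (-A) B h hh
      rw [show B * -A = -(B * A) from by rw [mul_neg]] at this
      exact ⟨_, this⟩
    · have e1 : z • ((1 : X →L[ℂ] X) - (z⁻¹ • A) * B) = z • (1 : X →L[ℂ] X) - A * B := by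
        rw [smul_sub, smul_mul_assoc, smul_smul, mul_inv_cancel₀ hz, one_smul]
      rw [← e1] at hh
      have h2' := gdi_smul z⁻¹ (inv_ne_zero hz) _ h hh
      rw [smul_smul, inv_mul_cancel₀ hz, one_smul, inv_inv] at h2'
      obtain ⟨k, hk⟩ := jacobsonGD (z⁻¹ • A) B (z • h) h2'
      have h3' := gdi_smul z hz _ k hk
      have e2 : z • ((1 : X →L[ℂ] X) - B * (z⁻¹ • A)) = z • (1 : X →L[ℂ] X) - B * A := by
        rw [smul_sub, mul_smul_comm, smul_smul, mul_inv_cancel₀ hz, one_smul]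
      rw [e2] at h3'
      exact ⟨z⁻¹ • k, h3'⟩
  ext z
  simp only [gDrazinSpectrum, Set.mem_setOf_eq]
  exact not_congr ⟨main A B z, main B A z⟩
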